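/- Let X be a measurable space, T ≥ 1, and let μ₀ be a probability measure on X. Let (κ_t)_{t=1}^T and (η_t)_{t=1}^T be Markov kernels from X to X, and let Q and Q̂ be the joint laws on X^{T+1} of the time-inhomogeneous Markov chains with common initial distribution μ₀ and transition kernels (κ_t) and (η_t), respectively. Then D_KL(Q ‖ Q̂) ≤ Σ_{t=1}^T sup_{z ∈ X} D_KL( κ_t(z) ‖ η_t(z) ), with the convention that both sides take values in the extended nonnegative reals. -/

import Mathlib

/-!
By the data processing inequality and the chain rule, passing from time `T` to `T + 1` adds
`KL(Q_T ⊗ κ_T ‖ Q_T ⊗ η_T)` to the divergence, so it suffices to bound this conditional term by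
`sup_z KL(κ_T z ‖ η_T z)`. With no countability assumption on `X`, the density `g` of `Q ⊗ κ`
w.r.t. `Q ⊗ η` cannot be disintegrated into the fibrewise densities; we only know that each
section `g (a, ·)` has mass one under `η a`. Gibbs' inequality `log x ≤ x - 1` then bounds
`∫ log g (a, ·) d(κ a)` by `KL(κ a ‖ η a)`, and `x log x ≥ x - 1` controls the negative part of
`log g`, which makes `log g` integrable.
-/

open MeasureTheory ProbabilityTheory
open scoped ENNReal ProbabilityTheory Classical

/-- The Kullback–Leibler divergence `D_KL(μ‖ν)`, with values in the extended
nonnegative reals: `∫ log (dμ/dν) dμ` if `μ ≪ ν` and the integral exists,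
and `+∞` otherwise. -/
noncomputable def klDiv {α : Type*} [MeasurableSpace α] (μ ν : Measure α) : ℝ≥0∞ :=
  if μ ≪ ν ∧ Integrable (llr μ ν) μ then ENNReal.ofReal (∫ x, llr μ ν x ∂μ) else ∞

/-- The joint law on `X^{T+1}` of the time-inhomogeneous Markov chain with initial
distribution `μ` and transition kernels `κ 0, κ 1, …, κ (T-1)` (the kernel `κ t` maps
the state at time `t` to the state at time `t+1`), obtained by iterated
composition-products `μ ⊗ κ 0 ⊗ ⋯ ⊗ κ (T-1)`. -/
noncomputable def chainLaw {X : Type*} [MeasurableSpace X] (μ : Measure X)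
    (κ : ℕ → Kernel X X) : (T : ℕ) → Measure (Fin (T + 1) → X)
  | 0 => μ.map fun x _ => x
  | T + 1 =>
      (chainLaw μ κ T ⊗ₘ (κ T).comap (fun f => f (Fin.last T)) (measurable_pi_apply _)).map
        fun p => Fin.snoc p.1 p.2

open Real

lemma klDiv_eq_informationTheory_klDiv {α : Type*} [MeasurableSpace α] (μ ν : Measure α)
    [IsProbabilityMeasure μ] [IsProbabilityMeasure ν] :
    klDiv μ ν = InformationTheory.klDiv μ ν := by
  by_cases h : μ ≪ ν ∧ Integrable (llr μ ν) μ
  · rw [klDiv, if_pos h, InformationTheory.klDiv_of_ac_of_integrable h.1 h.2]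
    simp
  · rw [klDiv, if_neg h, eq_comm, InformationTheory.klDiv_eq_top_iff]
    exact fun hac hint => h ⟨hac, hint⟩

namespace ENNReal

lemma mul_ofReal_neg_log_toReal_le_one (x : ℝ≥0∞) :
    x * ENNReal.ofReal (-Real.log x.toReal) ≤ 1 := by
  rcases eq_or_ne x ∞ with rfl | hx
  · simp
  rw [← ofReal_toReal hx, ← ofReal_mul toReal_nonneg, toReal_ofReal toReal_nonneg, ← ofReal_one]
  refine ofReal_le_ofReal ?_
  rw [mul_neg]
  linarith [Real.self_sub_one_le_mul_log (toReal_nonneg (a := x)), toReal_nonneg (a := x)]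

lemma ofReal_add_ofReal_neg_add_one_le {x y z : ℝ} (h : x - y ≤ z - 1) :
    ENNReal.ofReal x + ENNReal.ofReal (-y) + 1
      ≤ ENNReal.ofReal y + ENNReal.ofReal (-x) + ENNReal.ofReal z := by
  have hparts : max x 0 + max (-y) 0 + 1 ≤ max y 0 + max (-x) 0 + z := by
    linarith [max_zero_sub_max_neg_zero_eq_self x, max_zero_sub_max_neg_zero_eq_self y]
  calc ENNReal.ofReal x + ENNReal.ofReal (-y) + 1
      = ENNReal.ofReal (max x 0 + max (-y) 0 + 1) := by
        rw [ofReal_add (by positivity) zero_le_one,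
          ofReal_add (le_max_right _ _) (le_max_right _ _)]
        simp
    _ ≤ ENNReal.ofReal (max y 0 + max (-x) 0 + z) := ofReal_le_ofReal hparts
    _ ≤ ENNReal.ofReal y + ENNReal.ofReal (-x) + ENNReal.ofReal z := by
        refine ofReal_add_le.trans (add_le_add_left ?_ _)
        rw [ofReal_add (le_max_right _ _) (le_max_right _ _)]
        simp

end ENNReal

namespace MeasureTheory

variable {α : Type*} [MeasurableSpace α] {μ : Measure α} {f : α → ℝ}

lemma Integrable.ofReal_integral_eq_lintegral_sub (hf : Integrable f μ) :
    ENNReal.ofReal (∫ x, f x ∂μ)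
      = ∫⁻ x, ENNReal.ofReal (f x) ∂μ - ∫⁻ x, ENNReal.ofReal (-f x) ∂μ := by
  have hneg : ∫⁻ x, ENNReal.ofReal (-f x) ∂μ ≠ ∞ := hf.neg.lintegral_lt_top.ne
  rw [integral_eq_lintegral_pos_part_sub_lintegral_neg_part hf,
    ENNReal.ofReal_sub _ ENNReal.toReal_nonneg, ENNReal.ofReal_toReal hf.lintegral_lt_top.ne,
    ENNReal.ofReal_toReal hneg]

lemma integrable_of_lintegral_ofReal_ne_top (hf : AEStronglyMeasurable f μ)
    (hpos : ∫⁻ x, ENNReal.ofReal (f x) ∂μ ≠ ∞) (hneg : ∫⁻ x, ENNReal.ofReal (-f x) ∂μ ≠ ∞) :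
    Integrable f μ := by
  have habs (a : ℝ) : ENNReal.ofReal ‖a‖ ≤ ENNReal.ofReal a + ENNReal.ofReal (-a) := by
    rcases le_total 0 a with ha | ha
    · simp [abs_of_nonneg ha]
    · simp [abs_of_nonpos ha, ENNReal.ofReal_of_nonpos ha]
  refine ⟨hf, (hasFiniteIntegral_iff_norm f).2 ?_⟩
  calc ∫⁻ x, ENNReal.ofReal ‖f x‖ ∂μ
      ≤ ∫⁻ x, (ENNReal.ofReal (f x) + ENNReal.ofReal (-f x)) ∂μ := lintegral_mono fun x => habs _
    _ = ∫⁻ x, ENNReal.ofReal (f x) ∂μ + ∫⁻ x, ENNReal.ofReal (-f x) ∂μ :=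
        lintegral_add_left' hf.aemeasurable.ennreal_ofReal _
    _ < ∞ := ENNReal.add_lt_top.2 ⟨hpos.lt_top, hneg.lt_top⟩

lemma lintegral_ofReal_neg_llr_le {ν : Measure α} [μ.HaveLebesgueDecomposition ν]
    (hμν : μ ≪ ν) :
    ∫⁻ x, ENNReal.ofReal (-llr μ ν x) ∂μ ≤ ν Set.univ := by
  rw [← lintegral_rnDeriv_mul hμν (by fun_prop), ← lintegral_one]
  exact lintegral_mono fun x => ENNReal.mul_ofReal_neg_log_toReal_le_one _

end MeasureTheory

lemma lintegral_ofReal_log_le_klDiv_add {β : Type*} [MeasurableSpace β] {P Q : Measure β}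
    [IsProbabilityMeasure P] [IsProbabilityMeasure Q] {G : β → ℝ≥0∞} (hG : Measurable G)
    (hGQ : ∫⁻ b, G b ∂Q ≤ 1) (hG_pos : ∀ᵐ b ∂P, 0 < G b) (hG_lt_top : ∀ᵐ b ∂P, G b < ∞) :
    ∫⁻ b, ENNReal.ofReal (log (G b).toReal) ∂P
      ≤ InformationTheory.klDiv P Q + ∫⁻ b, ENNReal.ofReal (-log (G b).toReal) ∂P := by
  by_cases hKL : InformationTheory.klDiv P Q = ∞
  · simp [hKL]
  obtain ⟨hac, hint⟩ := InformationTheory.klDiv_ne_top_iff.1 hKL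
  have hKL_eq : InformationTheory.klDiv P Q = ENNReal.ofReal (∫ b, llr P Q b ∂P) := by
    simp [InformationTheory.klDiv_of_ac_of_integrable hac hint]
  set r := P.rnDeriv Q
  have hGr : ∫⁻ b, G b / r b ∂P ≤ 1 := by
    rw [← lintegral_rnDeriv_mul hac (by fun_prop)]
    exact (lintegral_mono fun b => ENNReal.mul_div_le).trans hGQ
  -- Gibbs: `log G - log r = log (G / r) ≤ G / r - 1`, split into positive and negative parts
  have hpt : ∀ᵐ b ∂P, ENNReal.ofReal (log (G b).toReal) + ENNReal.ofReal (-llr P Q b) + 1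
      ≤ ENNReal.ofReal (llr P Q b) + ENNReal.ofReal (-log (G b).toReal) + G b / r b := by
    filter_upwards [hG_pos, hG_lt_top, Measure.rnDeriv_pos hac,
      hac (Measure.rnDeriv_lt_top P Q)] with b hG0 hGtop hr0 hrtop
    refine (ENNReal.ofReal_add_ofReal_neg_add_one_le ?_).trans
      (by gcongr; exact ENNReal.ofReal_toReal_le)
    have hGb : 0 < (G b).toReal := ENNReal.toReal_pos hG0.ne' hGtop.ne
    have hrb : 0 < (r b).toReal := ENNReal.toReal_pos hr0.ne' hrtop.ne
    rw [llr_def, ← Real.log_div hGb.ne' hrb.ne', ENNReal.toReal_div]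
    exact Real.log_le_sub_one_of_pos (div_pos hGb hrb)
  have hsum : ∫⁻ b, ENNReal.ofReal (log (G b).toReal) ∂P
        + ∫⁻ b, ENNReal.ofReal (-llr P Q b) ∂P + 1
      ≤ ∫⁻ b, ENNReal.ofReal (llr P Q b) ∂P
        + ∫⁻ b, ENNReal.ofReal (-log (G b).toReal) ∂P + 1 :=
    calc _ = ∫⁻ b, (ENNReal.ofReal (log (G b).toReal) + ENNReal.ofReal (-llr P Q b) + 1) ∂P := by
          rw [lintegral_add_right _ measurable_const, lintegral_add_left (by fun_prop)]
          simp
      _ ≤ ∫⁻ b, (ENNReal.ofReal (llr P Q b) + ENNReal.ofReal (-log (G b).toReal)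
            + G b / r b) ∂P := lintegral_mono_ae hpt
      _ ≤ _ := by
          rw [lintegral_add_left (by fun_prop), lintegral_add_left (by fun_prop)]
          gcongr
  have hllr : ∫⁻ b, ENNReal.ofReal (llr P Q b) ∂P
      ≤ InformationTheory.klDiv P Q + ∫⁻ b, ENNReal.ofReal (-llr P Q b) ∂P := by
    rw [hKL_eq, hint.ofReal_integral_eq_lintegral_sub, add_comm]
    exact le_add_tsub
  rw [ENNReal.add_le_add_iff_right ENNReal.one_ne_top] at hsum
  rw [← ENNReal.add_le_add_iff_right hint.neg.lintegral_lt_top.ne]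
  calc _ ≤ _ := hsum
    _ ≤ _ := add_le_add_left hllr _
    _ = _ := add_right_comm _ _ _

lemma klDiv_compProd_le_of_forall_le {α β : Type*} [MeasurableSpace α] [MeasurableSpace β]
    (μ : Measure α) [IsProbabilityMeasure μ] (κ η : Kernel α β) [IsMarkovKernel κ]
    [IsMarkovKernel η] {C : ℝ≥0∞} (h : ∀ a, InformationTheory.klDiv (κ a) (η a) ≤ C) :
    InformationTheory.klDiv (μ ⊗ₘ κ) (μ ⊗ₘ η) ≤ C := by
  rcases eq_or_ne C ∞ with rfl | hC
  · exact le_top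
  have hac : μ ⊗ₘ κ ≪ μ ⊗ₘ η := Measure.AbsolutelyContinuous.compProd_right <| ae_of_all _
    fun a => (InformationTheory.klDiv_ne_top_iff.1 ((h a).trans_lt hC.lt_top).ne).1
  set g := (μ ⊗ₘ κ).rnDeriv (μ ⊗ₘ η)
  -- `g (a, ·)` need not be `∂κ a/∂η a`, but it is a probability density w.r.t. `η a`
  have hmass : ∀ᵐ a ∂μ, ∫⁻ b, g (a, b) ∂η a ≤ 1 := by
    filter_upwards [lintegral_rnDeriv_compProd hac] with a ha
    exact (ha.trans measure_univ).le
  have hpos : ∀ᵐ a ∂μ, ∀ᵐ b ∂κ a, 0 < g (a, b) :=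
    Measure.ae_ae_of_ae_compProd (Measure.rnDeriv_pos hac)
  have hlt_top : ∀ᵐ a ∂μ, ∀ᵐ b ∂κ a, g (a, b) < ∞ :=
    Measure.ae_ae_of_ae_compProd (hac (Measure.rnDeriv_lt_top _ _))
  have hneg : ∫⁻ p, ENNReal.ofReal (-llr (μ ⊗ₘ κ) (μ ⊗ₘ η) p) ∂(μ ⊗ₘ κ) ≠ ∞ :=
    ne_top_of_le_ne_top (measure_ne_top _ _) (lintegral_ofReal_neg_llr_le hac)
  have hpos_part : ∫⁻ p, ENNReal.ofReal (llr (μ ⊗ₘ κ) (μ ⊗ₘ η) p) ∂(μ ⊗ₘ κ)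
      ≤ C + ∫⁻ p, ENNReal.ofReal (-llr (μ ⊗ₘ κ) (μ ⊗ₘ η) p) ∂(μ ⊗ₘ κ) := by
    rw [Measure.lintegral_compProd (by fun_prop), Measure.lintegral_compProd (by fun_prop)]
    calc _ ≤ ∫⁻ a, (C + ∫⁻ b, ENNReal.ofReal (-log (g (a, b)).toReal) ∂κ a) ∂μ := by
          refine lintegral_mono_ae ?_
          filter_upwards [hmass, hpos, hlt_top] with a ha_mass ha_pos ha_lt_top
          exact (lintegral_ofReal_log_le_klDiv_add (by fun_prop) ha_mass ha_pos ha_lt_top).trans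
            (by gcongr; exact h a)
      _ = _ := by
          rw [lintegral_add_left measurable_const, lintegral_const, measure_univ, mul_one]
          rfl
  have hint : Integrable (llr (μ ⊗ₘ κ) (μ ⊗ₘ η)) (μ ⊗ₘ κ) :=
    integrable_of_lintegral_ofReal_ne_top (by fun_prop)
      (ne_top_of_le_ne_top (ENNReal.add_ne_top.2 ⟨hC, hneg⟩) hpos_part) hneg
  rw [InformationTheory.klDiv_of_ac_of_integrable hac hint]
  simpa [hint.ofReal_integral_eq_lintegral_sub] using hpos_part

lemma measurable_finSnoc {X : Type*} [MeasurableSpace X] {n : ℕ} :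
    Measurable fun p : (Fin n → X) × X => (Fin.snoc p.1 p.2 : Fin (n + 1) → X) := by
  refine measurable_pi_lambda _ fun i => ?_
  cases i using Fin.lastCases with
  | last => simpa using measurable_snd
  | cast j =>
    simp only [Fin.snoc_castSucc]
    fun_prop

section ChainLaw

variable {X : Type*} [MeasurableSpace X] (μ : Measure X) [IsProbabilityMeasure μ]
  (κ η : ℕ → Kernel X X) [∀ t, IsMarkovKernel (κ t)] [∀ t, IsMarkovKernel (η t)]

instance isProbabilityMeasure_chainLaw (T : ℕ) : IsProbabilityMeasure (chainLaw μ κ T) := by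
  induction T with
  | zero => exact Measure.isProbabilityMeasure_map (by fun_prop)
  | succ T ih => exact Measure.isProbabilityMeasure_map measurable_finSnoc.aemeasurable

lemma klDiv_chainLaw_succ_le (T : ℕ) :
    klDiv (chainLaw μ κ (T + 1)) (chainLaw μ η (T + 1))
      ≤ klDiv (chainLaw μ κ T) (chainLaw μ η T) + ⨆ z : X, klDiv (κ T z) (η T z) := by
  simp only [klDiv_eq_informationTheory_klDiv]
  rw [chainLaw, chainLaw]
  calc _ ≤ _ := InformationTheory.klDiv_map_le _ _ measurable_finSnoc
    _ = _ := InformationTheory.klDiv_compProd_eq_add _ _ _ _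
    _ ≤ _ := by
        gcongr
        exact klDiv_compProd_le_of_forall_le _ _ _ fun f =>
          le_iSup (fun z => InformationTheory.klDiv (κ T z) (η T z)) (f (Fin.last T))

end ChainLaw

theorem klDiv_chainLaw_le_sum_iSup_general
    {X : Type*} [MeasurableSpace X] (T : ℕ)
    (μ₀ : Measure X) [IsProbabilityMeasure μ₀]
    (κ η : ℕ → Kernel X X) [∀ t, IsMarkovKernel (κ t)] [∀ t, IsMarkovKernel (η t)] :
    klDiv (chainLaw μ₀ κ T) (chainLaw μ₀ η T)
      ≤ ∑ t ∈ Finset.range T, ⨆ z : X, klDiv (κ t z) (η t z) := by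
  induction T with
  | zero =>
    have hinit : chainLaw μ₀ κ 0 = chainLaw μ₀ η 0 := rfl
    simp [hinit, klDiv_eq_informationTheory_klDiv]
  | succ T ih =>
    rw [Finset.sum_range_succ]
    exact (klDiv_chainLaw_succ_le μ₀ κ η T).trans (by gcongr)

/-- Telescoping bound for Markov chains with the same initial distribution:
`D_KL(Q ‖ Q̂) ≤ ∑_{t=1}^T sup_z D_KL(κ_t(z) ‖ η_t(z))`, where `Q` and `Q̂` are the joint
laws on `X^{T+1}` of the chains with common initial law `μ₀` and transition kernels
`(κ_t)` and `(η_t)` respectively. -/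
theorem klDiv_chainLaw_le_sum_iSup
    {X : Type*} [MeasurableSpace X] (T : ℕ) (hT : 1 ≤ T)
    (μ₀ : Measure X) [IsProbabilityMeasure μ₀]
    (κ η : ℕ → Kernel X X) [∀ t, IsMarkovKernel (κ t)] [∀ t, IsMarkovKernel (η t)] :
    klDiv (chainLaw μ₀ κ T) (chainLaw μ₀ η T)
      ≤ ∑ t ∈ Finset.range T, ⨆ z : X, klDiv (κ t z) (η t z) :=
  klDiv_chainLaw_le_sum_iSup_general T μ₀ κ η
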